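/- arXiv:1301.3400 — 4 statements merged into one kernel-verified Lean document; each statement's English description precedes it below -/
import Mathlib

section
/- Let n ≥ 2 and consider in ℤⁿ ⋊ Sₙ the elements τ = (0, c), where c is the n-cycle c(k) = k − 1 mod n, and γ = ((0, …, 0, 1), id). If p ≥ 1 and γ^{a₁}τ^{b₁} γ^{a₂}τ^{b₂} ⋯ γ^{a_p}τ^{b_p} = e with every a_i ≠ 0 and no b_i divisible by n, then p ≥ 4. -/
/-- The automorphism of `ℤ^α` (written multiplicatively) given by permuting
coordinates by `s`. -/
def permMulAut {α : Type*} (s : Equiv.Perm α) : MulAut (Multiplicative (α → ℤ)) where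
  toFun z := Multiplicative.ofAdd (Multiplicative.toAdd z ∘ ⇑s.symm)
  invFun z := Multiplicative.ofAdd (Multiplicative.toAdd z ∘ ⇑s)
  left_inv z := by simp [Function.comp_def]
  right_inv z := by simp [Function.comp_def]
  map_mul' z₁ z₂ := rfl

/-- The action of the symmetric group on `ℤ^α` by permuting coordinates,
as a homomorphism to the automorphism group. -/
def permHom (α : Type*) : Equiv.Perm α →* MulAut (Multiplicative (α → ℤ)) where
  toFun := permMulAut
  map_one' := by ext z; rfl
  map_mul' s t := by ext z; rfl

open Equiv Equiv.Perm in
/-- A `B`-th power (integer exponent) of the inverse rotation fixes a point of `Fin n`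
iff `n ∣ B`. -/
lemma finRotate_zpow_fix {n : ℕ} (hn : 2 ≤ n) (B : ℤ) (x : Fin n) :
    (((finRotate n)⁻¹ : Perm (Fin n)) ^ B) x = x ↔ (n : ℤ) ∣ B := by
  have hc : IsCycle ((finRotate n)⁻¹ : Perm (Fin n)) := (isCycle_finRotate_of_le hn).inv
  have hord : orderOf ((finRotate n)⁻¹ : Perm (Fin n)) = n := by
    rw [orderOf_inv, (isCycle_finRotate_of_le hn).orderOf, support_finRotate_of_le hn,
      Finset.card_univ, Fintype.card_fin]
  have hx : ((finRotate n)⁻¹ : Perm (Fin n)) x ≠ x := by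
    have : x ∈ support ((finRotate n)⁻¹ : Perm (Fin n)) := by
      rw [support_inv, support_finRotate_of_le hn]; exact Finset.mem_univ x
    exact mem_support.mp this
  constructor
  · intro h
    have h0 : (0:ℤ) ≤ B % (n:ℤ) := Int.emod_nonneg B (by positivity)
    have key : ((finRotate n)⁻¹ : Perm (Fin n)) ^ B
        = ((finRotate n)⁻¹ : Perm (Fin n)) ^ ((B % (n:ℤ)).toNat) := by
      have := (zpow_mod_orderOf ((finRotate n)⁻¹ : Perm (Fin n)) B).symm
      rw [hord] at this
      rw [this, ← zpow_natCast, Int.toNat_of_nonneg h0]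
    have h1 : ((finRotate n)⁻¹ : Perm (Fin n)) ^ ((B % (n:ℤ)).toNat) = 1 :=
      (hc.pow_eq_one_iff' hx).2 (by rw [← key]; exact h)
    have h2 : ((finRotate n)⁻¹ : Perm (Fin n)) ^ B = 1 := key.trans h1
    have := orderOf_dvd_iff_zpow_eq_one.mpr h2
    rwa [hord] at this
  · intro h
    have : ((finRotate n)⁻¹ : Perm (Fin n)) ^ B = 1 :=
      orderOf_dvd_iff_zpow_eq_one.mp (by rw [hord]; exact_mod_cast h)
    rw [this]; rfl

/-- Let `n ≥ 2` and consider in `ℤⁿ ⋊ Sₙ` the elements `τ = (0, c)`, where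
`c(k) = k - 1 mod n` is an `n`-cycle, and `γ = ((0, …, 0, 1), id)`. If `p ≥ 1`
and `γ^{a₁}τ^{b₁} ⋯ γ^{a_p}τ^{b_p} = e` with every `aᵢ ≠ 0` and no `bᵢ`
divisible by `n`, then `p ≥ 4`. -/
theorem stmt_8 (n : ℕ) (hn : 2 ≤ n) (p : ℕ) (hp : 1 ≤ p) (a b : Fin p → ℤ)
    (ha : ∀ i, a i ≠ 0) (hb : ∀ i, ¬ ((n : ℤ) ∣ b i))
    (γ τ : Multiplicative (Fin n → ℤ) ⋊[permHom (Fin n)] Equiv.Perm (Fin n))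
    (hγ : γ = ⟨Multiplicative.ofAdd (Pi.single (⟨n - 1, by omega⟩ : Fin n) (1 : ℤ)), 1⟩)
    (hτ : τ = ⟨1, (finRotate n).symm⟩)
    (h : ((List.finRange p).map (fun i => γ ^ (a i) * τ ^ (b i))).prod = 1) :
    4 ≤ p := by
  by_contra hq
  push_neg at hq
  set x0 : Fin n := ⟨n - 1, by omega⟩ with hx0
  set g : Multiplicative (Fin n → ℤ) := Multiplicative.ofAdd (Pi.single x0 (1 : ℤ)) with hg
  set c : Equiv.Perm (Fin n) := (finRotate n)⁻¹ with hc
  have hγ' : γ = SemidirectProduct.inl g := hγ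
  have hτ' : τ = SemidirectProduct.inr c := hτ
  subst hγ' hτ'
  have hsym : ∀ B : ℤ, ((c ^ B).symm x0 = x0) ↔ (n : ℤ) ∣ B := by
    intro B
    rw [← Equiv.Perm.inv_def, ← zpow_neg, hc, finRotate_zpow_fix hn (-B) x0, Int.dvd_neg]
  have hval : ∀ (B z : ℤ),
      Multiplicative.toAdd ((permHom (Fin n) (c ^ B)) (g ^ z)) x0
        = if (n : ℤ) ∣ B then z else 0 := by
    intro B z
    show (Multiplicative.toAdd (g ^ z) ∘ ⇑(c ^ B).symm) x0 = _
    rw [Function.comp_apply, toAdd_zpow, hg, toAdd_ofAdd, Pi.smul_apply, Pi.single_apply]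
    rcases eq_or_ne ((c ^ B).symm x0) x0 with he | he
    · rw [if_pos ((hsym B).1 he), if_pos he]; simp
    · rw [if_neg (fun hd' => he ((hsym B).2 hd')), if_neg he]; simp
  have hval0 : ∀ z : ℤ, Multiplicative.toAdd (g ^ z) x0 = z := by
    intro z
    rw [toAdd_zpow, hg, toAdd_ofAdd, Pi.smul_apply, Pi.single_eq_same]
    simp
  interval_cases p
  · -- p = 1
    rw [show List.finRange 1 = [0] from rfl] at h
    simp only [List.map_cons, List.map_nil, List.prod_cons, List.prod_nil, mul_one,
      ← map_zpow] at h
    have hL := congrArg (SemidirectProduct.left) h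
    simp only [SemidirectProduct.mul_left, SemidirectProduct.mul_right,
      SemidirectProduct.left_inl, SemidirectProduct.right_inl, SemidirectProduct.left_inr,
      SemidirectProduct.right_inr, map_one, map_mul, one_mul, mul_one,
      SemidirectProduct.one_left] at hL
    have hE := congrFun (congrArg Multiplicative.toAdd hL) x0
    simp only [toAdd_mul, Pi.add_apply, toAdd_one, Pi.zero_apply, hval0, hval] at hE
    exact ha 0 (by omega)
  · -- p = 2
    rw [show List.finRange 2 = [0, 1] from rfl] at h
    simp only [List.map_cons, List.map_nil, List.prod_cons, List.prod_nil, mul_one,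
      ← map_zpow] at h
    have hL := congrArg (SemidirectProduct.left) h
    simp only [SemidirectProduct.mul_left, SemidirectProduct.mul_right,
      SemidirectProduct.left_inl, SemidirectProduct.right_inl, SemidirectProduct.left_inr,
      SemidirectProduct.right_inr, map_one, map_mul, one_mul, mul_one,
      SemidirectProduct.one_left] at hL
    have hE := congrFun (congrArg Multiplicative.toAdd hL) x0
    simp only [toAdd_mul, Pi.add_apply, toAdd_one, Pi.zero_apply, hval0, hval] at hE
    rw [if_neg (hb 0)] at hE
    exact ha 0 (by omega)
  · -- p = 3
    rw [show List.finRange 3 = [0, 1, 2] from rfl] at h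
    simp only [List.map_cons, List.map_nil, List.prod_cons, List.prod_nil, mul_one,
      ← map_zpow] at h
    have hR := congrArg (SemidirectProduct.rightHom) h
    simp only [map_mul, map_one, SemidirectProduct.rightHom_inl, SemidirectProduct.rightHom_inr,
      one_mul, mul_one] at hR
    have hL := congrArg (SemidirectProduct.left) h
    simp only [SemidirectProduct.mul_left, SemidirectProduct.mul_right,
      SemidirectProduct.left_inl, SemidirectProduct.right_inl, SemidirectProduct.left_inr,
      SemidirectProduct.right_inr, map_one, map_mul, one_mul, mul_one,
      SemidirectProduct.one_left] at hL
    have hc1 : c ^ (b 0 + (b 1 + b 2)) = 1 := by rw [zpow_add, zpow_add]; exact hR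
    have hd : (n : ℤ) ∣ (b 0 + (b 1 + b 2)) := by
      refine (finRotate_zpow_fix hn _ x0).1 ?_
      rw [← hc, hc1]; rfl
    have hnd : ¬ ((n : ℤ) ∣ (b 0 + b 1)) := by
      intro hdd
      refine hb 2 ?_
      have h2 : b 0 + (b 1 + b 2) - (b 0 + b 1) = b 2 := by ring
      rw [← h2]
      exact dvd_sub hd hdd
    simp only [← MulAut.mul_apply, ← map_mul, ← zpow_add] at hL
    have hE := congrFun (congrArg Multiplicative.toAdd hL) x0
    simp only [toAdd_mul, Pi.add_apply, toAdd_one, Pi.zero_apply, hval0, hval] at hE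
    rw [if_neg (hb 0), if_neg hnd] at hE
    exact ha 0 (by omega)
end

section
/- The semidirect product ℤ³ ⋊ S₃ (with S₃ permuting coordinates) has the presentation with two generators a, b and relations b² = e, (baba⁻¹)³ = e, and ba³ba⁻³ = e, where the isomorphism sends a to ((0, 0, 1), c) with c the 3-cycle c(k) = k − 1 mod 3, and b to (0, (1 2)). -/
/-- Relators on the two generators `a` (encoded `true`) and `b` (encoded
`false`): `b² = e`, `(baba⁻¹)³ = e`, and `ba³ba⁻³ = e`. -/
def sdpRelsThree : Set (FreeGroup Bool) :=
  letI a : FreeGroup Bool := FreeGroup.of true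
  letI b : FreeGroup Bool := FreeGroup.of false
  {b ^ 2, (b * a * b * a⁻¹) ^ 3, b * a ^ 3 * b * (a ^ 3)⁻¹}

open Equiv Multiplicative

section ZPowLift

variable {ι Q : Type*} [DecidableEq ι] [Group Q]

theorem permHom_ofAdd_single (σ : Perm ι) (i : ι) (n : ℤ) :
    permHom ι σ (ofAdd (Pi.single i n)) = ofAdd (Pi.single (σ i) n) := by
  show ofAdd (Pi.single i n ∘ σ.symm) = _
  rw [Pi.single_comp_equiv, symm_symm]

theorem ofAdd_single_eq_zpow (i : ι) (n : ℤ) :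
    (ofAdd (Pi.single i n) : Multiplicative (ι → ℤ)) = ofAdd (Pi.single i 1) ^ n := by
  rw [← ofAdd_zsmul, ← Pi.single_smul, smul_eq_mul, mul_one]

variable [Fintype ι]

theorem multiplicative_pi_int_hom_ext {f g : Multiplicative (ι → ℤ) →* Q}
    (h : ∀ i, f (ofAdd (Pi.single i 1)) = g (ofAdd (Pi.single i 1))) : f = g := by
  let e := MulEquiv.funMultiplicative ι ℤ
  have hcomp : f.comp e.symm.toMonoidHom = g.comp e.symm.toMonoidHom :=
    MonoidHom.pi_ext fun i n ↦ by
      have : e.symm (Pi.mulSingle i n) = ofAdd (Pi.single i n.toAdd) := by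
        ext j; by_cases hj : j = i <;> simp [e, hj]
      simp only [MonoidHom.comp_apply, MulEquiv.coe_toMonoidHom, this]
      rw [ofAdd_single_eq_zpow, map_zpow, map_zpow, h]
  ext v
  rw [← e.symm_apply_apply v]
  exact DFunLike.congr_fun hcomp (e v)

def zpowLift (x : ι → Q) (hx : Pairwise fun i j ↦ Commute (x i) (x j)) :
    Multiplicative (ι → ℤ) →* Q :=
  (MonoidHom.noncommPiCoprod (fun i ↦ zpowersHom Q (x i))
    (hx.mono fun _ _ h _ _ ↦ h.zpow_zpow _ _)).comp (MulEquiv.funMultiplicative ι ℤ).toMonoidHom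

variable {x : ι → Q} {hx : Pairwise fun i j ↦ Commute (x i) (x j)}

theorem zpowLift_single (i : ι) (n : ℤ) : zpowLift x hx (ofAdd (Pi.single i n)) = x i ^ n := by
  have : MulEquiv.funMultiplicative ι ℤ (ofAdd (Pi.single i n)) = Pi.mulSingle i (ofAdd n) := by
    ext j; by_cases h : j = i <;> simp [h]
  rw [zpowLift, MonoidHom.comp_apply, MulEquiv.coe_toMonoidHom, this,
    MonoidHom.noncommPiCoprod_mulSingle, zpowersHom_apply, toAdd_ofAdd]

theorem zpowLift_comp_permHom {σ : Perm ι} {g : Q} (hg : ∀ i, g * x i * g⁻¹ = x (σ i)) :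
    (zpowLift x hx).comp (permHom ι σ).toMonoidHom =
      (MulAut.conj g).toMonoidHom.comp (zpowLift x hx) :=
  multiplicative_pi_int_hom_ext fun i ↦ by simp [permHom_ofAdd_single, zpowLift_single, hg]

end ZPowLift

section PermLift

variable {Q : Type*} [Group Q]

theorem conj_eq_of_closure_eq_top {ι : Type*} (x : ι → Q) (g : Perm ι →* Q)
    {S : Set (Perm ι)} (hS : Subgroup.closure S = ⊤)
    (h : ∀ σ ∈ S, ∀ i, g σ * x i * (g σ)⁻¹ = x (σ i)) (σ : Perm ι) (i : ι) :
    g σ * x i * (g σ)⁻¹ = x (σ i) := by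
  have hσ : σ ∈ Subgroup.closure S := hS ▸ Subgroup.mem_top σ
  induction hσ using Subgroup.closure_induction generalizing i with
  | mem σ hσ => exact h σ hσ i
  | one => simp
  | mul σ τ _ _ hσ hτ => simp only [map_mul, mul_inv_rev, Perm.mul_apply, ← hτ, ← hσ]; group
  | inv σ _ hσ =>
    obtain ⟨j, rfl⟩ := σ.surjective i
    rw [map_inv, inv_inv, ← hσ, Perm.coe_inv, symm_apply_apply]
    group

theorem closure_finRotate_symm_swap :
    Subgroup.closure {(finRotate 3).symm, swap (0 : Fin 3) 1} = ⊤ := by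
  have h := Perm.closure_cycle_adjacent_swap isCycle_finRotate.inv (by decide) (1 : Fin 3)
  rwa [swap_comm] at h

-- Every `p : Perm (Fin 3)` is `c ^ rotExp p * swap 0 1 ^ reflExp p` with `c = (finRotate 3).symm`,
-- read off from `p 2` and from whether `p` is a rotation.
def rotExp (p : Perm (Fin 3)) : ℕ := ((2 : Fin 3) - p 2).val

def reflExp (p : Perm (Fin 3)) : ℕ := if p 1 = p 0 + 1 then 0 else 1

theorem reflExp_mul : ∀ p q : Perm (Fin 3), (reflExp p + reflExp q) % 2 = reflExp (p * q) := by
  decide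

theorem rotExp_mul : ∀ p q : Perm (Fin 3),
    (rotExp p + 2 ^ reflExp p * rotExp q) % 3 = rotExp (p * q) := by
  decide

theorem semiconjBy_pow_pow {r s : Q} (h : SemiconjBy s r (r ^ 2)) (j k : ℕ) :
    SemiconjBy (s ^ j) (r ^ k) (r ^ (2 ^ j * k)) := by
  induction j generalizing k with
  | zero => simp
  | succ j ih =>
    rw [pow_succ, pow_succ, mul_assoc]
    exact (ih (2 * k)).mul_left (pow_mul r 2 k ▸ h.pow_right k)

variable {r s : Q} (hr : r ^ 3 = 1) (hs : s ^ 2 = 1) (hsr : s * r * s⁻¹ = r⁻¹)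

def permThreeLift : Perm (Fin 3) →* Q where
  toFun p := r ^ rotExp p * s ^ reflExp p
  map_one' := by simp [rotExp, reflExp]
  map_mul' p q := by
    have h : SemiconjBy s r (r ^ 2) := by
      rw [SemiconjBy, ← mul_inv_eq_iff_eq_mul, hsr, inv_eq_of_mul_eq_one_right]
      rw [← pow_succ', hr]
    rw [← rotExp_mul, ← reflExp_mul, ← pow_eq_pow_mod _ hr, ← pow_eq_pow_mod _ hs, pow_add,
      pow_add, mul_assoc, ← mul_assoc (r ^ (2 ^ _ * _)), ← (semiconjBy_pow_pow h _ _).eq]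
    simp only [mul_assoc]

theorem permThreeLift_finRotate_symm : permThreeLift hr hs hsr (finRotate 3).symm = r := by
  simp [permThreeLift, show rotExp (finRotate 3).symm = 1 by decide,
    show reflExp (finRotate 3).symm = 0 by decide]

theorem permThreeLift_swap : permThreeLift hr hs hsr (swap 0 1) = s := by
  simp [permThreeLift, show rotExp (swap 0 1) = 0 by decide, show reflExp (swap 0 1) = 1 by decide]

end PermLift

abbrev SdpThree := Multiplicative (Fin 3 → ℤ) ⋊[permHom (Fin 3)] Perm (Fin 3)

structure SdpThreePair (Q : Type*) [Group Q] where
  a : Q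
  b : Q
  b_sq : b ^ 2 = 1
  comm_cube : (b * a * b * a⁻¹) ^ 3 = 1
  conj_a_cube : b * a ^ 3 * b * (a ^ 3)⁻¹ = 1

namespace SdpThreePair

variable {Q : Type*} [Group Q] (d : SdpThreePair Q)

def t : Q := d.b * d.a * d.b * d.a⁻¹

-- The words that the isomorphism sends to the `3`-cycle and to the basis vectors of `ℤ³`.
def r : Q := d.a⁻¹ * d.t * d.a

def x : Fin 3 → Q := ![d.t * d.a * d.t, d.a * d.t⁻¹, d.t⁻¹ * d.a]

theorem x_zero : d.x 0 = d.t * d.a * d.t := rfl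

theorem x_one : d.x 1 = d.a * d.t⁻¹ := rfl

theorem x_two : d.x 2 = d.t⁻¹ * d.a := rfl

theorem b_mul_self : d.b * d.b = 1 := by
  rw [← sq, d.b_sq]

theorem b_inv : d.b⁻¹ = d.b :=
  inv_eq_of_mul_eq_one_right d.b_mul_self

theorem t_mul_t_mul_t : d.t * d.t * d.t = 1 := by
  rw [← pow_three', t, d.comm_cube]

theorem t_mul_t : d.t * d.t = d.t⁻¹ :=
  (inv_eq_of_mul_eq_one_right (by rw [← mul_assoc, t_mul_t_mul_t])).symm

theorem t_inv_mul_t_inv : d.t⁻¹ * d.t⁻¹ = d.t := by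
  rw [← mul_inv_rev, t_mul_t, inv_inv]

theorem b_conj_a : d.b * d.a * d.b⁻¹ = d.t * d.a := by
  rw [b_inv, t]; group

theorem b_conj_t : d.b * d.t * d.b⁻¹ = d.t⁻¹ :=
  calc d.b * d.t * d.b⁻¹ = d.b * d.b * (d.a * d.b * d.a⁻¹) * d.b⁻¹ := by rw [t]; group
  _ = (d.b * d.a * d.b⁻¹ * d.a⁻¹)⁻¹ := by rw [b_mul_self]; group
  _ = d.t⁻¹ := by rw [b_inv]; rfl

theorem ta_mul_ta : d.t * d.a * (d.t * d.a) = d.a * d.a * d.t⁻¹ := by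
  have h : d.t * d.a * (d.t * d.a) * (d.t * d.a) = d.a * d.a * d.a := by
    rw [← b_conj_a, ← pow_three', ← pow_three', conj_pow, b_inv]
    exact mul_inv_eq_one.mp d.conj_a_cube
  calc d.t * d.a * (d.t * d.a) = d.t * d.a * (d.t * d.a) * (d.t * d.a) * (d.t * d.a)⁻¹ := by group
  _ = d.a * d.a * d.t⁻¹ := by rw [h]; group

theorem r_pow_three : d.r ^ 3 = 1 :=
  calc d.r ^ 3 = d.a⁻¹ * (d.t * d.t * d.t) * d.a := by rw [pow_three', r]; group
  _ = 1 := by rw [t_mul_t_mul_t]; group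

theorem r_conj_x_zero : d.r * d.x 0 * d.r⁻¹ = d.x 2 :=
  calc d.r * d.x 0 * d.r⁻¹ = d.a⁻¹ * (d.t * d.a * (d.t * d.a)) * d.t * d.a⁻¹ * d.t⁻¹ * d.a := by
        rw [r, x_zero]; group
  _ = d.x 2 := by rw [ta_mul_ta, x_two]; group

theorem r_conj_x_two : d.r * d.x 2 * d.r⁻¹ = d.x 1 :=
  calc d.r * d.x 2 * d.r⁻¹ = d.a⁻¹ * d.t * d.a * (d.t⁻¹ * d.t⁻¹) * d.a := by rw [r, x_two]; group
  _ = d.a⁻¹ * (d.t * d.a * (d.t * d.a)) := by rw [t_inv_mul_t_inv]; group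
  _ = d.x 1 := by rw [ta_mul_ta, x_one]; group

theorem r_conj_x_one : d.r * d.x 1 * d.r⁻¹ = d.x 0 :=
  calc d.r * d.x 1 * d.r⁻¹ = d.r * (d.r * (d.r * d.x 0 * d.r⁻¹) * d.r⁻¹) * d.r⁻¹ := by
        rw [r_conj_x_zero, r_conj_x_two]
  _ = d.r ^ 3 * d.x 0 * (d.r ^ 3)⁻¹ := by rw [pow_three']; group
  _ = d.x 0 := by rw [r_pow_three]; group

theorem r_conj_x (i : Fin 3) : d.r * d.x i * d.r⁻¹ = d.x ((finRotate 3).symm i) := by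
  fin_cases i
  exacts [d.r_conj_x_zero, d.r_conj_x_one, d.r_conj_x_two]

theorem b_conj_x_zero : d.b * d.x 0 * d.b⁻¹ = d.x 1 :=
  calc d.b * d.x 0 * d.b⁻¹ = (d.b * d.t * d.b⁻¹) * (d.b * d.a * d.b⁻¹) * (d.b * d.t * d.b⁻¹) := by
        rw [x_zero]; group
  _ = d.x 1 := by rw [b_conj_t, b_conj_a, x_one]; group

theorem b_conj_x_one : d.b * d.x 1 * d.b⁻¹ = d.x 0 :=
  calc d.b * d.x 1 * d.b⁻¹ = d.b * (d.b * d.x 0 * d.b⁻¹) * d.b⁻¹ := by rw [b_conj_x_zero]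
  _ = d.b * d.b * d.x 0 * (d.b * d.b)⁻¹ := by group
  _ = d.x 0 := by rw [b_mul_self]; group

theorem b_conj_x_two : d.b * d.x 2 * d.b⁻¹ = d.x 2 :=
  calc d.b * d.x 2 * d.b⁻¹ = (d.b * d.t * d.b⁻¹)⁻¹ * (d.b * d.a * d.b⁻¹) := by rw [x_two]; group
  _ = d.t * d.t * d.a := by rw [b_conj_t, b_conj_a]; group
  _ = d.x 2 := by rw [t_mul_t, x_two]

theorem b_conj_x (i : Fin 3) : d.b * d.x i * d.b⁻¹ = d.x (swap 0 1 i) := by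
  fin_cases i
  exacts [d.b_conj_x_zero, d.b_conj_x_one, d.b_conj_x_two]

theorem b_conj_r : d.b * d.r * d.b⁻¹ = d.r⁻¹ :=
  calc d.b * d.r * d.b⁻¹ =
      (d.b * d.a * d.b⁻¹)⁻¹ * (d.b * d.t * d.b⁻¹) * (d.b * d.a * d.b⁻¹) := by rw [r]; group
  _ = d.r⁻¹ := by rw [b_conj_a, b_conj_t, r]; group

theorem commute_x_zero_two : Commute (d.x 0) (d.x 2) :=
  calc d.x 0 * d.x 2 = d.t * d.a * d.a := by rw [x_zero, x_two]; group
  _ = d.t⁻¹ * d.t⁻¹ * (d.t * d.a * (d.t * d.a)) * d.t := by rw [ta_mul_ta, t_inv_mul_t_inv]; group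
  _ = d.x 2 * d.x 0 := by rw [x_zero, x_two]; group

theorem pairwise_commute_x : Pairwise fun i j ↦ Commute (d.x i) (d.x j) := by
  have h02 := d.commute_x_zero_two
  have h21 : Commute (d.x 2) (d.x 1) := by
    simpa [MulAut.conj_apply, r_conj_x_zero, r_conj_x_two] using h02.map (MulAut.conj d.r)
  have h10 : Commute (d.x 1) (d.x 0) := by
    simpa [MulAut.conj_apply, r_conj_x_one, r_conj_x_two] using h21.map (MulAut.conj d.r)
  intro i j hij
  fin_cases i <;> fin_cases j <;> first | exact absurd rfl hij | assumption | exact Commute.symm ‹_›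

theorem x_two_mul_r : d.x 2 * d.r = d.a := by
  rw [x_two, r]; group

def permLift : Perm (Fin 3) →* Q := permThreeLift d.r_pow_three d.b_sq d.b_conj_r

theorem permLift_conj_x (p : Perm (Fin 3)) (i : Fin 3) :
    d.permLift p * d.x i * (d.permLift p)⁻¹ = d.x (p i) := by
  refine conj_eq_of_closure_eq_top d.x d.permLift closure_finRotate_symm_swap ?_ p i
  rintro p (rfl | rfl) i
  · rw [permLift, permThreeLift_finRotate_symm]; exact d.r_conj_x i
  · rw [permLift, permThreeLift_swap]; exact d.b_conj_x i

def lift : SdpThree →* Q :=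
  SemidirectProduct.lift (zpowLift d.x d.pairwise_commute_x) d.permLift
    fun p ↦ zpowLift_comp_permHom (d.permLift_conj_x p)

theorem lift_inl_single (i : Fin 3) :
    d.lift (SemidirectProduct.inl (ofAdd (Pi.single i 1))) = d.x i := by
  rw [lift, SemidirectProduct.lift_inl, zpowLift_single, zpow_one]

theorem lift_inr_finRotate_symm : d.lift (SemidirectProduct.inr (finRotate 3).symm) = d.r := by
  rw [lift, SemidirectProduct.lift_inr, permLift, permThreeLift_finRotate_symm]

theorem lift_inr_swap : d.lift (SemidirectProduct.inr (swap 0 1)) = d.b := by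
  rw [lift, SemidirectProduct.lift_inr, permLift, permThreeLift_swap]

theorem lift_a : d.lift ⟨ofAdd (Pi.single 2 1), (finRotate 3).symm⟩ = d.a := by
  rw [← SemidirectProduct.inl_left_mul_inr_right ⟨_, _⟩, map_mul, lift_inl_single,
    lift_inr_finRotate_symm, x_two_mul_r]

theorem lift_rels : ∀ w ∈ sdpRelsThree, FreeGroup.lift (fun i ↦ cond i d.a d.b) w = 1 := by
  rintro w (rfl | rfl | rfl) <;> simp [d.b_sq, d.comm_cube, d.conj_a_cube]

def presentedLift : PresentedGroup sdpRelsThree →* Q := PresentedGroup.toGroup d.lift_rels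

theorem presentedLift_of_true : d.presentedLift (PresentedGroup.of true) = d.a :=
  PresentedGroup.toGroup.of d.lift_rels

theorem presentedLift_of_false : d.presentedLift (PresentedGroup.of false) = d.b :=
  PresentedGroup.toGroup.of d.lift_rels

theorem map_x {Q' : Type*} [Group Q'] {d' : SdpThreePair Q'} (f : Q →* Q') (ha : f d.a = d'.a)
    (hb : f d.b = d'.b) (i : Fin 3) : f (d.x i) = d'.x i := by
  fin_cases i <;> simp [x, t, ha, hb]

theorem map_r {Q' : Type*} [Group Q'] {d' : SdpThreePair Q'} (f : Q →* Q') (ha : f d.a = d'.a)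
    (hb : f d.b = d'.b) : f d.r = d'.r := by
  simp [r, t, ha, hb]

end SdpThreePair

def SdpThree.pair : SdpThreePair SdpThree where
  a := ⟨ofAdd (Pi.single 2 1), (finRotate 3).symm⟩
  b := ⟨1, swap 0 1⟩
  b_sq := SemidirectProduct.ext (by decide) (by decide)
  comm_cube := SemidirectProduct.ext (by decide) (by decide)
  conj_a_cube := SemidirectProduct.ext (by decide) (by decide)

def presentedPair : SdpThreePair (PresentedGroup sdpRelsThree) where
  a := PresentedGroup.of true
  b := PresentedGroup.of false
  b_sq := by
    have h := PresentedGroup.one_of_mem (rels := sdpRelsThree) (Set.mem_insert _ _)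
    rwa [map_pow] at h
  comm_cube := by
    have h := PresentedGroup.one_of_mem (rels := sdpRelsThree)
      (Set.mem_insert_of_mem _ (Set.mem_insert _ _))
    rwa [map_pow, map_mul, map_mul, map_mul, map_inv] at h
  conj_a_cube := by
    have h := PresentedGroup.one_of_mem (rels := sdpRelsThree)
      (Set.mem_insert_of_mem _ (Set.mem_insert_of_mem _ rfl))
    rwa [map_mul, map_mul, map_mul, map_inv, map_pow] at h

theorem SdpThree.pair_x (i : Fin 3) :
    SdpThree.pair.x i = SemidirectProduct.inl (ofAdd (Pi.single i 1)) := by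
  fin_cases i <;> exact SemidirectProduct.ext (by decide) (by decide)

theorem SdpThree.pair_r : SdpThree.pair.r = SemidirectProduct.inr (finRotate 3).symm :=
  SemidirectProduct.ext (by decide) (by decide)

theorem presentedPair_lift_comp_presentedLift :
    presentedPair.lift.comp SdpThree.pair.presentedLift = MonoidHom.id _ :=
  PresentedGroup.ext fun
    | true => presentedPair.lift_a
    | false => presentedPair.lift_inr_swap

theorem presentedLift_comp_presentedPair_lift :
    SdpThree.pair.presentedLift.comp presentedPair.lift = MonoidHom.id SdpThree := by
  have ha := SdpThree.pair.presentedLift_of_true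
  have hb := SdpThree.pair.presentedLift_of_false
  refine SemidirectProduct.hom_ext (multiplicative_pi_int_hom_ext fun i ↦ ?_)
    (MonoidHom.eq_of_eqOn_dense closure_finRotate_symm_swap ?_)
  · simp only [MonoidHom.comp_apply, MonoidHom.id_apply]
    rw [presentedPair.lift_inl_single, presentedPair.map_x _ ha hb, SdpThree.pair_x]
  · rintro p (rfl | rfl) <;> simp only [MonoidHom.comp_apply, MonoidHom.id_apply]
    · rw [presentedPair.lift_inr_finRotate_symm, presentedPair.map_r _ ha hb, SdpThree.pair_r]
    · rw [presentedPair.lift_inr_swap]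
      exact hb

/-- The semidirect product `ℤ³ ⋊ S₃` (with `S₃` permuting coordinates) has the
presentation with two generators `a, b` and relations `b² = e`, `(baba⁻¹)³ = e`,
and `ba³ba⁻³ = e`, where the isomorphism sends `a` to `((0,0,1), c)` with `c`
the `3`-cycle `c(k) = k - 1 mod 3`, and `b` to `(0, (1 2))`. -/
theorem stmt_11 :
    ∃ e : PresentedGroup sdpRelsThree ≃*
        (Multiplicative (Fin 3 → ℤ) ⋊[permHom (Fin 3)] Equiv.Perm (Fin 3)),
      e (PresentedGroup.of true) =
        ⟨Multiplicative.ofAdd (Pi.single (2 : Fin 3) (1 : ℤ)), (finRotate 3).symm⟩ ∧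
      e (PresentedGroup.of false) =
        ⟨1, Equiv.swap (0 : Fin 3) (1 : Fin 3)⟩ :=
  ⟨MonoidHom.toMulEquiv _ _ presentedPair_lift_comp_presentedLift
      presentedLift_comp_presentedPair_lift,
    SdpThree.pair.presentedLift_of_true, SdpThree.pair.presentedLift_of_false⟩
end

section
/- The semidirect product ℤ² ⋊ S₂ (with S₂ permuting coordinates) has the presentation with two generators a, b and relations b² = e and ba²ba⁻² = e, where the isomorphism sends a to ((0, 1), c) with c the transposition of the two coordinates, and b to (0, c). -/
/-- Relators on the two generators `a` (encoded `true`) and `b` (encoded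
`false`): `b² = e` and `ba²ba⁻² = e`. -/
def sdpRelsTwo : Set (FreeGroup Bool) :=
  letI a : FreeGroup Bool := FreeGroup.of true
  letI b : FreeGroup Bool := FreeGroup.of false
  {b ^ 2, b * a ^ 2 * b * (a ^ 2)⁻¹}

/-!
Put `u = ab` and `v = ba`. The relations give `uv = a² = b a² b = vu` and `b v b⁻¹ = u`, so `u`
and `v` commute and are swapped by the involution `b`; hence `(m, n) ↦ vᵐ uⁿ` together with
`c ↦ b` defines a homomorphism `ℤ² ⋊ S₂ → ⟨a, b⟩` sending `((0, 1), c) = (0, 1) · c` to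
`u b = a`. In the other direction the relations are checked in `ℤ² ⋊ S₂`, where `ba` and `ab`
are the two coordinate generators of `ℤ²`, so both composites are the identity on generators.
-/

open Multiplicative SemidirectProduct

lemma Equiv.Perm.eq_one_or_eq_swap_zero_one (σ : Equiv.Perm (Fin 2)) :
    σ = 1 ∨ σ = Equiv.swap 0 1 := by
  revert σ; decide

lemma Multiplicative.eq_ofAdd_single_zpow_mul (z : Multiplicative (Fin 2 → ℤ)) :
    z = ofAdd (Pi.single 0 1) ^ z.toAdd 0 * ofAdd (Pi.single 1 1) ^ z.toAdd 1 := by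
  ext i
  fin_cases i <;> simp

section Group

variable {G : Type*} [Group G] {a b : G}

lemma commute_mul_mul_rev (hb : b * b = 1) (hab : b * (a * a) * b = a * a) :
    Commute (b * a) (a * b) := by
  have hba : b * a * (a * b) = a * a := by rw [← hab]; group
  have hab' : a * b * (b * a) = a * a := by rw [mul_assoc, ← mul_assoc b, hb, one_mul]
  exact hba.trans hab'.symm

lemma conj_mul_rev (hb : b * b = 1) : b * (b * a) * b⁻¹ = a * b := by
  rw [inv_eq_of_mul_eq_one_right hb, ← mul_assoc, hb, one_mul]

end Group

section Lift

variable {H : Type*} [Group H] {x y t : H}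

def commutingPairHom (hxy : Commute x y) : Multiplicative (Fin 2 → ℤ) →* H where
  toFun z := x ^ z.toAdd 0 * y ^ z.toAdd 1
  map_one' := by simp
  map_mul' z w := by
    simp only [toAdd_mul, Pi.add_apply, zpow_add]
    exact (hxy.zpow_zpow _ _).mul_mul_mul_comm _ _

lemma commutingPairHom_apply (hxy : Commute x y) (z : Multiplicative (Fin 2 → ℤ)) :
    commutingPairHom hxy z = x ^ z.toAdd 0 * y ^ z.toAdd 1 := rfl

def involutionHom (ht : t * t = 1) : Equiv.Perm (Fin 2) →* H where
  toFun σ := if σ = 1 then 1 else t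
  map_one' := if_pos rfl
  map_mul' σ τ := by
    rcases σ.eq_one_or_eq_swap_zero_one with rfl | rfl <;>
      rcases τ.eq_one_or_eq_swap_zero_one with rfl | rfl <;> simp [ht]

lemma involutionHom_swap (ht : t * t = 1) : involutionHom ht (Equiv.swap 0 1) = t :=
  if_neg (by decide : Equiv.swap (0 : Fin 2) 1 ≠ 1) (t := 1)

lemma commutingPairHom_comp_permHom (hxy : Commute x y) (ht : t * t = 1)
    (hconj : t * x * t⁻¹ = y) (σ : Equiv.Perm (Fin 2)) :
    (commutingPairHom hxy).comp (permHom (Fin 2) σ).toMonoidHom =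
      (MulAut.conj (involutionHom ht σ)).toMonoidHom.comp (commutingPairHom hxy) := by
  rcases σ.eq_one_or_eq_swap_zero_one with rfl | rfl
  · refine MonoidHom.ext fun z => ?_
    simp [involutionHom]
  have hconj' : t * y * t⁻¹ = x := by
    rw [← hconj, inv_eq_of_mul_eq_one_right ht, ← mul_assoc, ← mul_assoc, ht, one_mul, mul_assoc,
      ht, mul_one]
  refine MonoidHom.ext fun z => ?_
  show x ^ z.toAdd 1 * y ^ z.toAdd 0 = involutionHom ht (Equiv.swap 0 1) * _ * _⁻¹
  rw [involutionHom_swap, ← MulAut.conj_apply, commutingPairHom_apply, map_mul, map_zpow,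
    map_zpow, MulAut.conj_apply, MulAut.conj_apply, hconj, hconj']
  exact (hxy.zpow_zpow _ _).eq

end Lift

abbrev IntSqSwap := Multiplicative (Fin 2 → ℤ) ⋊[permHom (Fin 2)] Equiv.Perm (Fin 2)

namespace IntSqSwap

def glide : IntSqSwap := ⟨ofAdd (Pi.single 1 1), Equiv.swap 0 1⟩

def reflection : IntSqSwap := ⟨1, Equiv.swap 0 1⟩

lemma glide_eq_inl_mul_reflection : glide = inl (ofAdd (Pi.single 1 1)) * reflection :=
  mk_eq_inl_mul_inr _ _

lemma glide_mul_reflection : glide * reflection = inl (ofAdd (Pi.single 1 1)) := by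
  refine SemidirectProduct.ext ?_ ?_ <;> decide

lemma reflection_mul_glide : reflection * glide = inl (ofAdd (Pi.single 0 1)) := by
  refine SemidirectProduct.ext ?_ ?_ <;> decide

section Lift

variable {H : Type*} [Group H] {x y t : H}
  (hxy : Commute x y) (ht : t * t = 1) (hconj : t * x * t⁻¹ = y)

def lift : IntSqSwap →* H :=
  SemidirectProduct.lift (commutingPairHom hxy) (involutionHom ht)
    (commutingPairHom_comp_permHom hxy ht hconj)

lemma lift_inl (z : Multiplicative (Fin 2 → ℤ)) :
    lift hxy ht hconj (inl z) = x ^ z.toAdd 0 * y ^ z.toAdd 1 :=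
  SemidirectProduct.lift_inl _ _ _ _

lemma lift_reflection : lift hxy ht hconj reflection = t :=
  (SemidirectProduct.lift_inr _ _ _ _).trans (involutionHom_swap ht)

lemma lift_glide : lift hxy ht hconj glide = y * t := by
  rw [glide_eq_inl_mul_reflection, map_mul, lift_inl, lift_reflection]
  simp

end Lift

open PresentedGroup

lemma sdpRelsTwo_lift_eq_one :
    ∀ r ∈ sdpRelsTwo, FreeGroup.lift (fun g => if g then glide else reflection) r = 1 := by
  rintro r (rfl | rfl) <;>
    simp only [map_mul, map_pow, map_inv, FreeGroup.lift_apply_of, Bool.false_eq_true, if_true,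
      if_false] <;>
    refine SemidirectProduct.ext ?_ ?_ <;> decide

lemma of_false_mul_self : (of false : PresentedGroup sdpRelsTwo) * of false = 1 := by
  simpa [pow_two, PresentedGroup.of] using one_of_mem (rels := sdpRelsTwo) (Set.mem_insert _ _)

lemma of_false_conj_of_true_sq :
    (of false : PresentedGroup sdpRelsTwo) * (of true * of true) * of false = of true * of true := by
  have h := one_of_mem (rels := sdpRelsTwo) (Set.mem_insert_of_mem _ rfl)
  simp only [map_mul, map_pow, map_inv, mul_inv_eq_one] at h
  simpa [pow_two, PresentedGroup.of] using h

def toPresentedGroup : IntSqSwap →* PresentedGroup sdpRelsTwo :=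
  lift (commute_mul_mul_rev of_false_mul_self of_false_conj_of_true_sq)
    of_false_mul_self (conj_mul_rev of_false_mul_self)

def ofPresentedGroup : PresentedGroup sdpRelsTwo →* IntSqSwap :=
  toGroup sdpRelsTwo_lift_eq_one

lemma ofPresentedGroup_of_true : ofPresentedGroup (of true) = glide :=
  toGroup.of _

lemma ofPresentedGroup_of_false : ofPresentedGroup (of false) = reflection :=
  toGroup.of _

lemma toPresentedGroup_reflection : toPresentedGroup reflection = of false :=
  lift_reflection _ _ _

lemma toPresentedGroup_glide : toPresentedGroup glide = of true := by
  rw [toPresentedGroup, lift_glide, mul_assoc, of_false_mul_self, mul_one]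

lemma toPresentedGroup_comp_ofPresentedGroup :
    toPresentedGroup.comp ofPresentedGroup = MonoidHom.id _ := by
  refine PresentedGroup.ext fun g => ?_
  cases g
  · exact congrArg toPresentedGroup ofPresentedGroup_of_false |>.trans toPresentedGroup_reflection
  · exact congrArg toPresentedGroup ofPresentedGroup_of_true |>.trans toPresentedGroup_glide

lemma ofPresentedGroup_comp_toPresentedGroup :
    ofPresentedGroup.comp toPresentedGroup = MonoidHom.id _ := by
  apply SemidirectProduct.hom_ext
  · refine MonoidHom.ext fun z => ?_
    simp only [MonoidHom.comp_apply, MonoidHom.id_apply, toPresentedGroup, lift_inl]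
    rw [map_mul, map_zpow, map_zpow, map_mul, map_mul, ofPresentedGroup_of_true,
      ofPresentedGroup_of_false, reflection_mul_glide, glide_mul_reflection, ← map_zpow inl,
      ← map_zpow inl, ← map_mul, ← eq_ofAdd_single_zpow_mul]
  · refine MonoidHom.ext fun σ => ?_
    rcases σ.eq_one_or_eq_swap_zero_one with rfl | rfl
    · simp
    · exact congrArg ofPresentedGroup toPresentedGroup_reflection |>.trans ofPresentedGroup_of_false

def presentedGroupEquiv : PresentedGroup sdpRelsTwo ≃* IntSqSwap :=
  ofPresentedGroup.toMulEquiv toPresentedGroup toPresentedGroup_comp_ofPresentedGroup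
    ofPresentedGroup_comp_toPresentedGroup

end IntSqSwap

/-- The semidirect product `ℤ² ⋊ S₂` (with `S₂` permuting coordinates) has the
presentation with two generators `a, b` and relations `b² = e` and `ba²ba⁻² = e`,
where the isomorphism sends `a` to `((0,1), c)` with `c` the transposition of
the two coordinates, and `b` to `(0, c)`. -/
theorem stmt_12 :
    ∃ e : PresentedGroup sdpRelsTwo ≃*
        (Multiplicative (Fin 2 → ℤ) ⋊[permHom (Fin 2)] Equiv.Perm (Fin 2)),
      e (PresentedGroup.of true) =
        ⟨Multiplicative.ofAdd (Pi.single (1 : Fin 2) (1 : ℤ)),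
          Equiv.swap (0 : Fin 2) (1 : Fin 2)⟩ ∧
      e (PresentedGroup.of false) =
        ⟨1, Equiv.swap (0 : Fin 2) (1 : Fin 2)⟩ :=
  ⟨IntSqSwap.presentedGroupEquiv, IntSqSwap.ofPresentedGroup_of_true,
    IntSqSwap.ofPresentedGroup_of_false⟩
end

section
/- Let V be a finite set and let τ be a permutation of V. Let ℤ act on V on the right by v · m = τ^m(v), and let 𝔗 be the group of invertible elements of the monoid ℤ^V with the twisted multiplication (φ₂ * φ₁)(v) = φ₂(v) + φ₁(v · φ₂(v)). Then 𝔗 is isomorphic to the direct product, over the orbits O of τ on V, of the semidirect products ℤ^O ⋊ S(O), where the symmetric group S(O) of the orbit O acts on ℤ^O = (functions O → ℤ) by permuting coordinates. -/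
/-- `TwPerm τ` is the set of maps `V → ℤ`, to be equipped with the twisted
multiplication coming from the right `ℤ`-action `v · m = τ^m(v)` on `V`
determined by the permutation `τ`. -/
def TwPerm {V : Type*} (τ : Equiv.Perm V) := V → ℤ

theorem TwPerm.key {V : Type*} (τ : Equiv.Perm V) (x y : ℤ) (v : V) :
    (τ ^ (x + y)) v = (τ ^ y) ((τ ^ x) v) := by
  rw [add_comm, zpow_add, Equiv.Perm.mul_apply]

/-- The twisted multiplication `(φ₂ * φ₁)(v) = φ₂(v) + φ₁(v · φ₂(v))`, where
`v · m = τ^m(v)`, makes `ℤ^V` a monoid. -/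
instance TwPerm.instMonoid {V : Type*} (τ : Equiv.Perm V) : Monoid (TwPerm τ) where
  mul a b := fun v => a v + b ((τ ^ (a v)) v)
  one := fun _ => 0
  mul_assoc a b c := by
    funext v
    show (a v + b _) + c ((τ ^ (a v + b _)) v) = a v + (b _ + c _)
    rw [TwPerm.key, add_assoc]
  one_mul a := by
    funext v
    show (0 : ℤ) + a ((τ ^ (0 : ℤ)) v) = a v
    simp
  mul_one a := by
    funext v
    show a v + (0 : ℤ) = a v
    simp

/-! Write `σ_a v = τ^(a v) v`. Then `σ_(a * b) = σ_b ∘ σ_a`, `a` is invertible exactly when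
`σ_a` is a bijection, and `σ_a` always preserves the orbits of `τ`. On an orbit `O` of size
`n`, with base point `b` and `v = τ^(ℓ v) b`, the value `a v` is congruent to `ℓ (σ_a v) - ℓ v`
modulo `n`, and the quotient `w_a v` (a winding number) obeys the cocycle rule
`w_(a * b) v = w_a v + w_b (σ_a v)`. This is exactly the multiplication of `ℤ^O ⋊ S(O)`, so
`u ↦ (w_u|_O, (σ_u|_O)⁻¹)_O` is a homomorphism. It is injective because `a` is recovered from
`σ_a` and `w_a`, and surjective because every orbit-preserving bijection, paired with arbitrary
winding numbers, comes from a unit. -/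

open MulAction Function

theorem MulAction.selfEquivSigmaOrbits'_apply_coe {G α : Type*} [Group G] [MulAction G α]
    {O : orbitRel.Quotient G α} (x : O.orbit) : selfEquivSigmaOrbits' G α x = ⟨O, x⟩ :=
  (selfEquivSigmaOrbits' G α).apply_symm_apply ⟨O, x⟩

namespace Equiv.Perm

variable {V : Type*} (τ : Perm V)

local notation "Q" => orbitRel.Quotient (Subgroup.zpowers τ) V

theorem zpow_apply_eq_zpow_apply_iff (b : V) (m n : ℤ) :
    (τ ^ m) b = (τ ^ n) b ↔ (minimalPeriod τ b : ℤ) ∣ m - n := by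
  rw [← (τ ^ (-n)).injective.eq_iff, ← mul_apply, ← mul_apply, ← zpow_add, ← zpow_add,
    neg_add_cancel, zpow_zero, one_apply, neg_add_eq_sub]
  exact zpow_smul_eq_iff_minimalPeriod_dvd (a := τ)

theorem mk_zpow_apply (m : ℤ) (v : V) : (Quotient.mk'' ((τ ^ m) v) : Q) = Quotient.mk'' v :=
  Quotient.sound ⟨⟨τ ^ m, Subgroup.zpow_mem_zpowers τ m⟩, rfl⟩

theorem exists_zpow_apply_out (v : V) : ∃ m : ℤ, (τ ^ m) (Quotient.mk'' v : Q).out = v := by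
  obtain ⟨⟨_, m, rfl⟩, h⟩ := Quotient.exact (Quotient.out_eq (Quotient.mk'' v : Q)).symm
  exact ⟨m, h⟩

noncomputable def orbitPeriod (O : Q) : ℕ := minimalPeriod τ O.out

theorem orbitPeriod_ne_zero [Finite V] (O : Q) : (τ.orbitPeriod O : ℤ) ≠ 0 :=
  Nat.cast_ne_zero.mpr (NeZero.ne (minimalPeriod (τ • ·) O.out))

-- A chosen exponent, determined only modulo the orbit's period.
noncomputable def orbitLog (v : V) : ℤ := (τ.exists_zpow_apply_out v).choose

theorem zpow_orbitLog_apply (v : V) : (τ ^ τ.orbitLog v) (Quotient.mk'' v : Q).out = v :=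
  (τ.exists_zpow_apply_out v).choose_spec

theorem zpow_apply_eq_iff_dvd {v w : V} (h : (Quotient.mk'' v : Q) = Quotient.mk'' w) (m : ℤ) :
    (τ ^ m) v = w ↔
      (τ.orbitPeriod (Quotient.mk'' v) : ℤ) ∣ m + τ.orbitLog v - τ.orbitLog w := by
  have hw := τ.zpow_orbitLog_apply w
  rw [← h] at hw
  calc (τ ^ m) v = w
      ↔ (τ ^ (m + τ.orbitLog v)) (Quotient.mk'' v : Q).out
          = (τ ^ τ.orbitLog w) (Quotient.mk'' v : Q).out := by
        rw [zpow_add, mul_apply, zpow_orbitLog_apply, hw]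
    _ ↔ _ := τ.zpow_apply_eq_zpow_apply_iff _ _ _

end Equiv.Perm

namespace TwPerm

variable {V : Type*} {τ : Equiv.Perm V}

local notation "Q" => orbitRel.Quotient (Subgroup.zpowers τ) V

def shift (a : TwPerm τ) (v : V) : V := (τ ^ a v) v

theorem mul_apply (a b : TwPerm τ) (v : V) : (a * b) v = a v + b (a.shift v) := rfl

theorem one_apply (v : V) : (1 : TwPerm τ) v = 0 := rfl

theorem shift_mul (a b : TwPerm τ) : (a * b).shift = b.shift ∘ a.shift :=
  funext fun v => TwPerm.key τ _ _ v

theorem shift_one : (1 : TwPerm τ).shift = id :=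
  funext fun v => by simp [shift, one_apply]

theorem shift_inv_shift (u : (TwPerm τ)ˣ) (v : V) :
    shift (↑u⁻¹ : TwPerm τ) (shift (u : TwPerm τ) v) = v := by
  simpa [shift_one] using (congrFun (shift_mul (u : TwPerm τ) ↑u⁻¹) v).symm

def toPerm (u : (TwPerm τ)ˣ) : Equiv.Perm V where
  toFun := shift (u : TwPerm τ)
  invFun := shift (↑u⁻¹ : TwPerm τ)
  left_inv := shift_inv_shift u
  right_inv v := by simpa using shift_inv_shift u⁻¹ v

theorem isUnit_of_bijective_shift {a : TwPerm τ} (h : Bijective a.shift) : IsUnit a := by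
  set σ := Equiv.ofBijective _ h
  refine isUnit_iff_exists.mpr ⟨fun w => -a (σ.symm w), funext fun v => ?_, funext fun w => ?_⟩
  · show a v + -a (σ.symm (σ v)) = 0
    rw [σ.symm_apply_apply, add_neg_cancel]
  · obtain ⟨v, rfl⟩ := σ.surjective w
    show -a (σ.symm (σ v)) + a ((τ ^ (-a (σ.symm (σ v)))) ((τ ^ a v) v)) = 0
    rw [σ.symm_apply_apply, ← Equiv.Perm.mul_apply, ← zpow_add, neg_add_cancel, zpow_zero,
      Equiv.Perm.one_apply, neg_add_cancel]

theorem mk_shift (a : TwPerm τ) (v : V) : (Quotient.mk'' (a.shift v) : Q) = Quotient.mk'' v :=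
  τ.mk_zpow_apply _ v

theorem shift_mem_orbit_iff (a : TwPerm τ) {O : Q} {v : V} :
    a.shift v ∈ O.orbit ↔ v ∈ O.orbit := by
  simp only [orbitRel.Quotient.mem_orbit, mk_shift]

noncomputable def winding (a : TwPerm τ) (v : V) : ℤ :=
  (a v + τ.orbitLog v - τ.orbitLog (a.shift v)) / τ.orbitPeriod (Quotient.mk'' v)

theorem orbitPeriod_mul_winding (a : TwPerm τ) (v : V) :
    τ.orbitPeriod (Quotient.mk'' v) * a.winding v =
      a v + τ.orbitLog v - τ.orbitLog (a.shift v) :=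
  Int.mul_ediv_cancel' ((τ.zpow_apply_eq_iff_dvd (a.mk_shift v).symm (a v)).mp rfl)

theorem apply_eq_orbitLog_add_winding (a : TwPerm τ) (v : V) :
    a v = τ.orbitLog (a.shift v) - τ.orbitLog v +
      τ.orbitPeriod (Quotient.mk'' v) * a.winding v := by
  rw [orbitPeriod_mul_winding]
  ring

theorem winding_mul [Finite V] (a b : TwPerm τ) (v : V) :
    (a * b).winding v = a.winding v + b.winding (a.shift v) := by
  have hb := b.orbitPeriod_mul_winding (a.shift v)
  rw [mk_shift] at hb
  apply mul_left_cancel₀ (τ.orbitPeriod_ne_zero (Quotient.mk'' v))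
  rw [mul_add, orbitPeriod_mul_winding, orbitPeriod_mul_winding, hb, mul_apply, shift_mul,
    comp_apply]
  ring

noncomputable def ofShiftWinding (f : V → V) (k : V → ℤ) : TwPerm τ :=
  fun v => τ.orbitLog (f v) - τ.orbitLog v + τ.orbitPeriod (Quotient.mk'' v) * k v

theorem shift_ofShiftWinding {f : V → V} (hf : ∀ v, (Quotient.mk'' (f v) : Q) = Quotient.mk'' v)
    (k : V → ℤ) : (ofShiftWinding f k : TwPerm τ).shift = f :=
  funext fun v => (τ.zpow_apply_eq_iff_dvd (hf v).symm _).mpr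
    ⟨k v, by simp only [ofShiftWinding]; ring⟩

theorem winding_ofShiftWinding [Finite V] {f : V → V}
    (hf : ∀ v, (Quotient.mk'' (f v) : Q) = Quotient.mk'' v) (k : V → ℤ) :
    (ofShiftWinding f k : TwPerm τ).winding = k := by
  funext v
  apply mul_left_cancel₀ (τ.orbitPeriod_ne_zero (Quotient.mk'' v))
  rw [orbitPeriod_mul_winding, shift_ofShiftWinding hf]
  simp only [ofShiftWinding]
  ring

def toPermOrbit (u : (TwPerm τ)ˣ) (O : Q) : Equiv.Perm O.orbit :=
  (toPerm u).subtypePerm fun _ => shift_mem_orbit_iff _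

theorem toPermOrbit_mul (u w : (TwPerm τ)ˣ) (O : Q) :
    toPermOrbit (u * w) O = toPermOrbit w O * toPermOrbit u O :=
  Equiv.ext fun x => Subtype.ext (congrFun (shift_mul (u : TwPerm τ) w) x)

variable [Finite V]

-- `shift` reverses products and `permHom` acts through inverses, hence the inverse below.
noncomputable def toSemidirectOrbit (O : Q) :
    (TwPerm τ)ˣ →* Multiplicative (O.orbit → ℤ) ⋊[permHom O.orbit] Equiv.Perm O.orbit :=
  MonoidHom.mk'
    (fun u => ⟨Multiplicative.ofAdd fun x => winding (u : TwPerm τ) x, (toPermOrbit u O)⁻¹⟩)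
    fun u w => by
      refine SemidirectProduct.ext ?_ ?_
      · show Multiplicative.ofAdd (fun x : O.orbit => winding (↑(u * w) : TwPerm τ) x)
          = Multiplicative.ofAdd (fun x : O.orbit =>
              winding (u : TwPerm τ) x + winding (w : TwPerm τ) (shift (u : TwPerm τ) x))
        simp only [Units.val_mul, winding_mul]
      · simp only [SemidirectProduct.mul_right, toPermOrbit_mul, mul_inv_rev]

theorem injective_pi_toSemidirectOrbit :
    Injective (MonoidHom.pi (toSemidirectOrbit (τ := τ))) := by
  refine (injective_iff_map_eq_one _).mpr fun u hu => Units.ext (funext fun v => ?_)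
  have hv : v ∈ orbitRel.Quotient.orbit (Quotient.mk'' v : Q) :=
    orbitRel.Quotient.mem_orbit.mpr rfl
  have hO := congrFun hu (Quotient.mk'' v)
  have hperm : toPermOrbit u (Quotient.mk'' v) = 1 :=
    inv_eq_one.mp (congrArg SemidirectProduct.right hO)
  have hshift : shift (u : TwPerm τ) v = v := congrArg (fun π => (π ⟨v, hv⟩ : V)) hperm
  have hwinding : winding (u : TwPerm τ) v = 0 :=
    congrFun (congrArg (fun g => Multiplicative.toAdd g.left) hO) ⟨v, hv⟩
  rw [apply_eq_orbitLog_add_winding (u : TwPerm τ) v, hshift, hwinding, Units.val_one, one_apply]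
  ring

theorem surjective_pi_toSemidirectOrbit :
    Surjective (MonoidHom.pi (toSemidirectOrbit (τ := τ))) := by
  intro g
  set e := selfEquivSigmaOrbits' (Subgroup.zpowers τ) V
  let π : Equiv.Perm V := e.trans ((Equiv.sigmaCongrRight fun O => (g O).right⁻¹).trans e.symm)
  have hπ (v : V) : (Quotient.mk'' (π v) : Q) = Quotient.mk'' v :=
    orbitRel.Quotient.mem_orbit.mp ((g _).right⁻¹ (e v).2).2
  let k (v : V) : ℤ := Multiplicative.toAdd (g (e v).1).left (e v).2
  have hunit := isUnit_of_bijective_shift ((shift_ofShiftWinding hπ k).symm ▸ π.bijective)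
  refine ⟨hunit.unit, funext fun O => SemidirectProduct.ext ?_ ?_⟩
  · show Multiplicative.ofAdd (fun x : O.orbit => winding (ofShiftWinding π k : TwPerm τ) x) =
      (g O).left
    rw [winding_ofShiftWinding hπ]
    funext x
    show Multiplicative.toAdd (g (e x).1).left (e x).2 = _
    rw [selfEquivSigmaOrbits'_apply_coe]
    rfl
  · show (toPermOrbit hunit.unit O)⁻¹ = _
    rw [inv_eq_iff_eq_inv]
    ext x
    show shift (ofShiftWinding π k : TwPerm τ) x = ((g O).right⁻¹ x : V)
    rw [shift_ofShiftWinding hπ]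
    show e.symm ⟨(e x).1, (g _).right⁻¹ (e x).2⟩ = _
    rw [selfEquivSigmaOrbits'_apply_coe]
    rfl

end TwPerm

/-- Let `V` be a finite set and `τ` a permutation of `V`, and let `ℤ` act on `V`
on the right by `v · m = τ^m(v)`. The group `𝔗` of invertible elements of the
monoid `ℤ^V` with the twisted multiplication is isomorphic to the direct
product, over the orbits `O` of `τ` on `V` (i.e. the orbits of the cyclic group
`⟨τ⟩ ≤ Perm V`), of the semidirect products `ℤ^O ⋊ S(O)`, where `S(O)` acts on
`ℤ^O` by permuting coordinates. -/
theorem stmt_16 {V : Type*} [Finite V] (τ : Equiv.Perm V) :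
    Nonempty ((TwPerm τ)ˣ ≃*
      ∀ O : MulAction.orbitRel.Quotient (Subgroup.zpowers τ) V,
        Multiplicative (↥(MulAction.orbitRel.Quotient.orbit O) → ℤ)
          ⋊[permHom ↥(MulAction.orbitRel.Quotient.orbit O)]
          Equiv.Perm ↥(MulAction.orbitRel.Quotient.orbit O)) :=
  ⟨MulEquiv.ofBijective (MonoidHom.pi TwPerm.toSemidirectOrbit)
    ⟨TwPerm.injective_pi_toSemidirectOrbit, TwPerm.surjective_pi_toSemidirectOrbit⟩⟩
end
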